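/- Let d ≥ 1, let ν ∈ ℝ^d be a unit vector, and let A be a real d×d matrix. Then −∫_{ℝ^d} ∇G_1(z)·(A z)·max(ν·z, 0) dz = c₀·( ν·(A ν) + tr A ), where c₀ = 1/√(2π) and ∇G_1(z) = −z·G_1(z) is the gradient of the standard Gaussian density G_1(z) = (2π)^{−d/2} exp(−|z|²/2). -/

import Mathlib

open MeasureTheory

/-- The standard Gaussian density `G_1(z) = (2π)^{-d/2} exp(-|z|²/2)` on `ℝ^d`. -/
noncomputable def stdGauss (d : ℕ) (z : EuclideanSpace ℝ (Fin d)) : ℝ :=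
  (2 * Real.pi) ^ (-(d : ℝ) / 2) * Real.exp (-‖z‖ ^ 2 / 2)

/-!
Since `-∇G_1(z) = z G_1(z)`, the integrand is `(z·Az) (ν·z)⁺ G_1(z)`. Change variables to the
coordinates `w` of `z` in an orthonormal basis whose `m`-th vector is `ν`: `G_1` is invariant,
`ν·z = w_m`, and `z·Az = w·Bw` where `B` is the matrix of `A` in that basis, so that
`B_mm = ν·Aν` and `tr B = tr A`. As `G_1` is a product of one-dimensional densities `φ`,
`∫ w_k w_l w_m⁺ G_1 = δ_kl (1 + δ_km) c₀`, which comes down to the moments `∫ t² φ = 1`,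
`∫ t⁺ φ = c₀` and `∫ t² t⁺ φ = 2 c₀`; on the half-line these follow from
`∫_0^∞ t^(n+2) φ = (n+1) ∫_0^∞ t^n φ`.
-/

open Real Set Filter Topology
open scoped InnerProductSpace Matrix

noncomputable def stdGaussReal (t : ℝ) : ℝ := (√(2 * π))⁻¹ * exp (-t ^ 2 / 2)

lemma stdGaussReal_pos (t : ℝ) : 0 < stdGaussReal t := by
  unfold stdGaussReal; positivity

lemma stdGaussReal_neg (t : ℝ) : stdGaussReal (-t) = stdGaussReal t := by
  simp [stdGaussReal]

lemma stdGaussReal_abs (t : ℝ) : stdGaussReal |t| = stdGaussReal t := by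
  simp [stdGaussReal]

lemma hasDerivAt_stdGaussReal (t : ℝ) : HasDerivAt stdGaussReal (-t * stdGaussReal t) t := by
  have h : HasDerivAt (fun x : ℝ => -x ^ 2 / 2) (-t) t :=
    (((hasDerivAt_pow 2 t).fun_neg).div_const 2).congr_deriv (by ring)
  exact (h.exp.const_mul (√(2 * π))⁻¹).congr_deriv (by rw [stdGaussReal]; ring)

lemma integrable_pow_mul_stdGaussReal (n : ℕ) : Integrable fun t => t ^ n * stdGaussReal t := by
  have h := (integrable_rpow_mul_exp_neg_mul_sq (b := 1 / 2) (by norm_num)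
    (s := n) (by linarith [(n.cast_nonneg : (0 : ℝ) ≤ n)])).const_mul (√(2 * π))⁻¹
  refine h.congr (ae_of_all _ fun t => ?_)
  simp only [stdGaussReal, rpow_natCast]
  ring_nf

lemma tendsto_pow_mul_stdGaussReal_atTop (n : ℕ) :
    Tendsto (fun t => t ^ n * stdGaussReal t) atTop (𝓝 0) := by
  have h := (rpow_mul_exp_neg_mul_sq_isLittleO_exp_neg (by norm_num : (0 : ℝ) < 1 / 2) n)
    |>.trans_tendsto (tendsto_exp_atBot.comp
      (tendsto_id.const_mul_atTop_of_neg (by norm_num : (-(1 / 2) : ℝ) < 0)))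
  have := h.const_mul (√(2 * π))⁻¹
  rw [mul_zero] at this
  refine this.congr fun t => ?_
  simp only [stdGaussReal, rpow_natCast]
  ring_nf

lemma integrable_mul_stdGaussReal_of_abs_le {f : ℝ → ℝ} {n : ℕ} (hf : AEStronglyMeasurable f)
    (hbound : ∀ t, |f t| ≤ max 1 |t| ^ n) : Integrable fun t => f t * stdGaussReal t := by
  refine Integrable.mono' ((integrable_pow_mul_stdGaussReal 0).add
    (integrable_pow_mul_stdGaussReal n).abs) (hf.mul (by unfold stdGaussReal; fun_prop))
    (ae_of_all _ fun t => ?_)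
  have hmax : max 1 |t| ^ n ≤ 1 + |t| ^ n := by
    rcases le_total |t| 1 with h | h
    · rw [max_eq_left h, one_pow]; exact le_add_of_nonneg_right (by positivity)
    · rw [max_eq_right h]; linarith [zero_le_one (α := ℝ)]
  change |f t * stdGaussReal t| ≤ t ^ 0 * stdGaussReal t + |t ^ n * stdGaussReal t|
  rw [abs_mul, abs_of_pos (stdGaussReal_pos t), abs_mul, abs_pow,
    abs_of_pos (stdGaussReal_pos t), pow_zero, one_mul, ← one_add_mul]
  exact mul_le_mul_of_nonneg_right ((hbound t).trans hmax) (stdGaussReal_pos t).le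

lemma integral_Ioi_stdGaussReal : ∫ t in Ioi 0, stdGaussReal t = 1 / 2 := by
  have h := integral_gaussian_Ioi (1 / 2)
  have e : (fun t : ℝ => exp (-t ^ 2 / 2)) = fun t => exp (-(1 / 2) * t ^ 2) := by
    ext; ring_nf
  simp only [stdGaussReal, integral_const_mul]
  rw [e, h, div_div_eq_mul_div, div_one, mul_comm π]
  field_simp

lemma integral_Ioi_mul_stdGaussReal : ∫ t in Ioi 0, t * stdGaussReal t = (√(2 * π))⁻¹ := by
  have h := integral_Ioi_of_hasDerivAt_of_tendsto' (a := 0) (f := fun t => -stdGaussReal t)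
    (fun t _ => (hasDerivAt_stdGaussReal t).neg)
    (by simpa using (integrable_pow_mul_stdGaussReal 1).integrableOn)
    (by simpa using (tendsto_pow_mul_stdGaussReal_atTop 0).neg)
  simpa [stdGaussReal] using h

lemma integral_Ioi_pow_add_two_mul_stdGaussReal (n : ℕ) :
    ∫ t in Ioi 0, t ^ (n + 2) * stdGaussReal t
      = (n + 1) * ∫ t in Ioi 0, t ^ n * stdGaussReal t := by
  have hderiv (t : ℝ) : HasDerivAt (fun t => -(t ^ (n + 1) * stdGaussReal t))
      (t ^ (n + 2) * stdGaussReal t - (n + 1) * (t ^ n * stdGaussReal t)) t :=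
    ((hasDerivAt_pow (n + 1) t).mul (hasDerivAt_stdGaussReal t)).fun_neg.congr_deriv
      (by push_cast; ring)
  have hint := integrable_pow_mul_stdGaussReal
  have h := integral_Ioi_of_hasDerivAt_of_tendsto' (a := 0) (fun t _ => hderiv t)
    (((hint (n + 2)).sub ((hint n).const_mul _)).integrableOn)
    (tendsto_pow_mul_stdGaussReal_atTop (n + 1)).neg
  rw [integral_sub (hint (n + 2)).integrableOn ((hint n).const_mul _).integrableOn,
    integral_const_mul] at h
  simp only [neg_zero, Nat.add_eq_zero_iff, one_ne_zero, and_false, ne_eq, not_false_eq_true,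
    zero_pow, zero_mul, sub_self] at h
  linarith

lemma integral_max_zero_mul (f : ℝ → ℝ) : ∫ t, max t 0 * f t = ∫ t in Ioi 0, t * f t := by
  rw [← integral_indicator measurableSet_Ioi]
  congr 1 with t
  by_cases ht : 0 < t
  · simp [ht, ht.le]
  · simp [ht, not_lt.1 ht]

lemma integral_stdGaussReal : ∫ t, stdGaussReal t = 1 := by
  rw [← integral_congr_ae (ae_of_all _ stdGaussReal_abs), integral_comp_abs,
    integral_Ioi_stdGaussReal]
  norm_num

lemma integral_mul_stdGaussReal : ∫ t, t * stdGaussReal t = 0 := by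
  have h := integral_neg_eq_self (fun t => t * stdGaussReal t) volume
  simp only [stdGaussReal_neg, neg_mul, integral_neg] at h
  linarith

lemma integral_mul_self_mul_stdGaussReal : ∫ t, t * t * stdGaussReal t = 1 := by
  have e : (fun t => t * t * stdGaussReal t) = fun t => |t| ^ 2 * stdGaussReal |t| := by
    ext t; rw [sq_abs, stdGaussReal_abs]; ring
  rw [e, integral_comp_abs (f := fun t => t ^ 2 * stdGaussReal t),
    integral_Ioi_pow_add_two_mul_stdGaussReal 0]
  simp [integral_Ioi_stdGaussReal]

lemma integral_max_mul_stdGaussReal : ∫ t, max t 0 * stdGaussReal t = (√(2 * π))⁻¹ := by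
  rw [integral_max_zero_mul, integral_Ioi_mul_stdGaussReal]

lemma integral_mul_self_mul_max_mul_stdGaussReal :
    ∫ t, t * t * max t 0 * stdGaussReal t = 2 * (√(2 * π))⁻¹ := by
  have h := integral_Ioi_pow_add_two_mul_stdGaussReal 1
  simp only [pow_one, Nat.cast_one, Nat.reduceAdd, one_add_one_eq_two,
    integral_Ioi_mul_stdGaussReal] at h
  have e : (fun t => t * t * max t 0 * stdGaussReal t)
      = fun t => max t 0 * (t ^ 2 * stdGaussReal t) := by
    ext t; ring
  rw [e, integral_max_zero_mul, ← h]
  congr 1 with t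
  ring

lemma OrthonormalBasis.inner_map_eq_dotProduct_toMatrix_mulVec {ι E : Type*} [Fintype ι]
    [DecidableEq ι] [NormedAddCommGroup E] [InnerProductSpace ℝ E] (b : OrthonormalBasis ι ℝ E)
    (T : E →ₗ[ℝ] E) (x y : E) :
    ⟪x, T y⟫_ℝ
      = (b.repr x).ofLp ⬝ᵥ LinearMap.toMatrix b.toBasis b.toBasis T *ᵥ (b.repr y).ofLp := by
  have hTy :
      (b.repr (T y)).ofLp = LinearMap.toMatrix b.toBasis b.toBasis T *ᵥ (b.repr y).ofLp := by
    simpa only [← funext (b.coe_toBasis_repr_apply _)] using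
      (LinearMap.toMatrix_mulVec_repr b.toBasis b.toBasis T y).symm
  rw [← b.repr.inner_map_map, EuclideanSpace.inner_eq_star_dotProduct, star_trivial,
    dotProduct_comm, hTy]

lemma inner_toLpLin {n : Type*} [Fintype n] [DecidableEq n] (A : Matrix n n ℝ)
    (x y : EuclideanSpace ℝ n) : ⟪x, Matrix.toLpLin 2 2 A y⟫_ℝ = x.ofLp ⬝ᵥ A *ᵥ y.ofLp := by
  rw [EuclideanSpace.inner_eq_star_dotProduct, Matrix.ofLp_toLpLin, Matrix.toLin'_apply,
    star_trivial, dotProduct_comm]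

lemma trace_toMatrix_toLpLin {n : Type*} [Fintype n] [DecidableEq n] (A : Matrix n n ℝ)
    (b : OrthonormalBasis n ℝ (EuclideanSpace ℝ n)) :
    (LinearMap.toMatrix b.toBasis b.toBasis (Matrix.toLpLin 2 2 A)).trace = A.trace := by
  rw [← LinearMap.trace_eq_matrix_trace, Matrix.toLpLin_eq_toLin, Matrix.trace_toLin_eq]

lemma exists_orthonormalBasis_apply_eq {ι E : Type*} [Fintype ι] [NormedAddCommGroup E]
    [InnerProductSpace ℝ E] [FiniteDimensional ℝ E] (hcard : Module.finrank ℝ E = Fintype.card ι)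
    {v : E} (hv : ‖v‖ = 1) (i : ι) : ∃ b : OrthonormalBasis ι ℝ E, b i = v := by
  have hv' : Orthonormal ℝ (({i} : Set ι).domRestrict fun _ => v) :=
    ⟨fun _ => hv, fun j j' hjj' => absurd (Subtype.ext (j.2.trans j'.2.symm)) hjj'⟩
  obtain ⟨b, hb⟩ := hv'.exists_orthonormalBasis_extension_of_card_eq hcard
  exact ⟨b, hb i rfl⟩

section Euclidean

variable {d : ℕ}

lemma stdGauss_eq_prod (w : EuclideanSpace ℝ (Fin d)) :
    stdGauss d w = ∏ i, stdGaussReal (w i) := by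
  have hpow : (2 * π) ^ (-(d : ℝ) / 2) = (√(2 * π))⁻¹ ^ d := by
    rw [sqrt_eq_rpow, ← rpow_neg (by positivity), ← rpow_natCast, ← rpow_mul (by positivity)]
    ring_nf
  simp only [stdGauss, stdGaussReal, Finset.prod_mul_distrib, Finset.prod_const,
    Finset.card_univ, Fintype.card_fin, ← exp_sum, EuclideanSpace.norm_sq_eq, Real.norm_eq_abs,
    sq_abs, hpow, ← Finset.sum_div, Finset.sum_neg_distrib]

lemma integral_prod_mul_stdGauss (f : Fin d → ℝ → ℝ) :
    ∫ w : EuclideanSpace ℝ (Fin d), (∏ i, f i (w i)) * stdGauss d w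
      = ∏ i, ∫ t, f i t * stdGaussReal t := by
  simp_rw [stdGauss_eq_prod, ← Finset.prod_mul_distrib]
  rw [← (PiLp.volume_preserving_toLp (Fin d)).integral_comp
    (MeasurableEquiv.toLp 2 _).measurableEmbedding]
  exact integral_fintype_prod_volume_eq_prod (fun i t => f i t * stdGaussReal t)

lemma integrable_prod_mul_stdGauss {f : Fin d → ℝ → ℝ}
    (hf : ∀ i, Integrable fun t => f i t * stdGaussReal t) :
    Integrable fun w : EuclideanSpace ℝ (Fin d) => (∏ i, f i (w i)) * stdGauss d w := by
  simp_rw [stdGauss_eq_prod, ← Finset.prod_mul_distrib]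
  rw [← (PiLp.volume_preserving_toLp (Fin d)).integrable_comp_emb
    (MeasurableEquiv.toLp 2 _).measurableEmbedding]
  exact Integrable.fintype_prod (f := fun i t => f i t * stdGaussReal t) hf

def coordFactor (k l m i : Fin d) (t : ℝ) : ℝ :=
  (if i = k then t else 1) * (if i = l then t else 1) * (if i = m then max t 0 else 1)

lemma coord_mul_coord_mul_max_eq_prod_coordFactor (k l m : Fin d) (w : Fin d → ℝ) :
    w k * w l * max (w m) 0 = ∏ i, coordFactor k l m i (w i) := by
  simp only [coordFactor, Finset.prod_mul_distrib, Finset.prod_ite_eq', Finset.mem_univ,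
    if_true]

lemma integrable_coordFactor_mul_stdGaussReal (k l m i : Fin d) :
    Integrable fun t => coordFactor k l m i t * stdGaussReal t := by
  refine integrable_mul_stdGaussReal_of_abs_le (n := 3)
    (by unfold coordFactor; split_ifs <;> fun_prop) fun t => ?_
  have hle (p : Prop) [Decidable p] {x : ℝ} (hx : |x| ≤ |t|) :
      |if p then x else 1| ≤ max 1 |t| := by
    split_ifs
    · exact hx.trans (le_max_right _ _)
    · simp
  have hmax : |max t 0| ≤ |t| := by simpa using abs_max_le_max_abs_abs (a := t) (b := 0)
  rw [coordFactor, abs_mul, abs_mul, pow_three, ← mul_assoc]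
  gcongr
  exacts [hle _ le_rfl, hle _ le_rfl, hle _ hmax]

lemma integrable_coord_mul_coord_mul_max_mul_stdGauss (k l m : Fin d) :
    Integrable fun w : EuclideanSpace ℝ (Fin d) => w k * w l * max (w m) 0 * stdGauss d w := by
  simp_rw [coord_mul_coord_mul_max_eq_prod_coordFactor]
  exact integrable_prod_mul_stdGauss (integrable_coordFactor_mul_stdGaussReal k l m)

lemma integral_coord_mul_coord_mul_max_mul_stdGauss (k l m : Fin d) :
    ∫ w : EuclideanSpace ℝ (Fin d), w k * w l * max (w m) 0 * stdGauss d w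
      = if k = l then (if k = m then 2 else 1) * (√(2 * π))⁻¹ else 0 := by
  simp_rw [coord_mul_coord_mul_max_eq_prod_coordFactor, integral_prod_mul_stdGauss]
  split_ifs with hkl hkm
  · subst hkl hkm
    rw [Finset.prod_eq_single k
      (fun i _ hi => by simp [coordFactor, hi, integral_stdGaussReal]) (by simp)]
    simp [coordFactor, integral_mul_self_mul_max_mul_stdGaussReal]
  · subst hkl
    rw [Finset.prod_eq_single m (fun i _ hi => by
      by_cases hik : i = k <;>
        simp [coordFactor, hi, hik, hkm, integral_stdGaussReal,
          integral_mul_self_mul_stdGaussReal]) (by simp)]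
    simp [coordFactor, Ne.symm hkm, integral_max_mul_stdGaussReal]
  · by_cases hkm : k = m
    · subst hkm
      exact Finset.prod_eq_zero (i := l) (Finset.mem_univ _)
        (by simp [coordFactor, Ne.symm hkl, integral_mul_stdGaussReal])
    · exact Finset.prod_eq_zero (i := k) (Finset.mem_univ _)
        (by simp [coordFactor, hkl, hkm, integral_mul_stdGaussReal])

lemma integral_dotProduct_mulVec_mul_max_mul_stdGauss (B : Matrix (Fin d) (Fin d) ℝ)
    (m : Fin d) :
    ∫ w : EuclideanSpace ℝ (Fin d), (w.ofLp ⬝ᵥ B *ᵥ w.ofLp) * max (w m) 0 * stdGauss d w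
      = (√(2 * π))⁻¹ * (B m m + B.trace) := by
  have hexpand (w : EuclideanSpace ℝ (Fin d)) :
      (w.ofLp ⬝ᵥ B *ᵥ w.ofLp) * max (w m) 0 * stdGauss d w
        = ∑ k, ∑ l, B k l * (w k * w l * max (w m) 0 * stdGauss d w) := by
    simp only [dotProduct, Matrix.mulVec, Finset.sum_mul, Finset.mul_sum]
    exact Finset.sum_congr rfl fun k _ => Finset.sum_congr rfl fun l _ => by ring
  have hint (k l : Fin d) :=
    (integrable_coord_mul_coord_mul_max_mul_stdGauss k l m).const_mul (B k l)
  simp_rw [hexpand]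
  rw [integral_finsetSum _ fun k _ => integrable_finsetSum _ fun l _ => hint k l]
  simp_rw [integral_finsetSum _ fun l _ => hint _ l, integral_const_mul,
    integral_coord_mul_coord_mul_max_mul_stdGauss]
  have hdiag (k : Fin d) : B k k * ((if k = m then 2 else 1) * (√(2 * π))⁻¹)
      = (√(2 * π))⁻¹ * B k k + if k = m then (√(2 * π))⁻¹ * B k k else 0 := by
    split_ifs <;> ring
  simp only [mul_ite, mul_zero, Finset.sum_ite_eq, Finset.mem_univ, if_true, hdiag,
    Finset.sum_add_distrib, Finset.sum_ite_eq', ← Finset.mul_sum, Matrix.trace, Matrix.diag]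
  ring

lemma neg_dotProduct_neg_smul_stdGauss (z : EuclideanSpace ℝ (Fin d)) (v : Fin d → ℝ) :
    -((fun i => -z i * stdGauss d z) ⬝ᵥ v) = (z.ofLp ⬝ᵥ v) * stdGauss d z := by
  have hsmul : (fun i => -z i * stdGauss d z) = (-stdGauss d z) • z.ofLp := by
    ext i; simp [mul_comm]
  rw [hsmul, smul_dotProduct, smul_eq_mul]
  ring

lemma stdGauss_linearIsometryEquiv_apply
    (U : EuclideanSpace ℝ (Fin d) ≃ₗᵢ[ℝ] EuclideanSpace ℝ (Fin d))
    (w : EuclideanSpace ℝ (Fin d)) :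
    stdGauss d (U w) = stdGauss d w := by
  simp [stdGauss]

lemma integral_comp_linearIsometryEquiv_mul_stdGauss
    (U : EuclideanSpace ℝ (Fin d) ≃ₗᵢ[ℝ] EuclideanSpace ℝ (Fin d))
    (f : EuclideanSpace ℝ (Fin d) → ℝ) :
    ∫ w, f (U w) * stdGauss d w = ∫ z, f z * stdGauss d z := by
  simpa [stdGauss_linearIsometryEquiv_apply] using
    U.measurePreserving.integral_comp U.toHomeomorph.measurableEmbedding
      fun z => f z * stdGauss d z

end Euclidean

theorem stmt_18 (d : ℕ) (hd : 1 ≤ d) (ν : EuclideanSpace ℝ (Fin d)) (hν : ‖ν‖ = 1)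
    (A : Matrix (Fin d) (Fin d) ℝ) :
    -∫ z : EuclideanSpace ℝ (Fin d),
        (dotProduct (fun i => -(z i) * stdGauss d z) (A.mulVec fun i => z i)) *
          max (dotProduct (fun i => ν i) fun i => z i) 0
      = (1 / Real.sqrt (2 * Real.pi)) *
          ((dotProduct (fun i => ν i) (A.mulVec fun i => ν i)) + A.trace) := by
  set m : Fin d := ⟨0, hd⟩
  obtain ⟨b, hb⟩ := exists_orthonormalBasis_apply_eq (by simp) hν m
  set T := Matrix.toLpLin 2 2 A
  set B := LinearMap.toMatrix b.toBasis b.toBasis T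
  have hrot (w : EuclideanSpace ℝ (Fin d)) :
      ⟪b.repr.symm w, T (b.repr.symm w)⟫_ℝ * max ⟪b.repr.symm w, ν⟫_ℝ 0
        = (w.ofLp ⬝ᵥ B *ᵥ w.ofLp) * max (w m) 0 := by
    rw [b.inner_map_eq_dotProduct_toMatrix_mulVec, ← hb, ← b.repr.inner_map_map, b.repr_self,
      EuclideanSpace.inner_single_right]
    simp only [LinearIsometryEquiv.apply_symm_apply, one_mul, conj_trivial, B]
  have hBmm : B m m = ν.ofLp ⬝ᵥ A *ᵥ ν.ofLp := by
    rw [← inner_toLpLin, b.inner_map_eq_dotProduct_toMatrix_mulVec, ← hb, b.repr_self]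
    simp [B, T]
  calc _ = ∫ z, ⟪z, T z⟫_ℝ * max ⟪z, ν⟫_ℝ 0 * stdGauss d z := by
        rw [← integral_neg]
        congr 1 with z
        rw [← neg_mul, neg_dotProduct_neg_smul_stdGauss, inner_toLpLin,
          EuclideanSpace.inner_eq_star_dotProduct, star_trivial]
        ring
    _ = ∫ w, (w.ofLp ⬝ᵥ B *ᵥ w.ofLp) * max (w m) 0 * stdGauss d w := by
        rw [← integral_comp_linearIsometryEquiv_mul_stdGauss b.repr.symm]
        simp_rw [hrot]
    _ = _ := by
        rw [integral_dotProduct_mulVec_mul_max_mul_stdGauss, hBmm, trace_toMatrix_toLpLin, one_div]
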